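/- Let d ≥ 1 be an integer and β, κ > 0. For any R > 0 there exists a constant C = C(d,β,κ,R) > 1 such that for all t ≥ R² and all r ≥ 2R: C^{-1}·ψ_{d,R}(t,r) ≤ H_{d,β,κ}(t,r) ≤ C·ψ_{d,R}(t,r). -/
import Mathlib


open Classical

noncomputable section

/-- `Log r := log(e - 1 + r)`. -/
def LLog (r : ℝ) : ℝ := Real.log (Real.exp 1 - 1 + r)

/-- `h_{β,κ}(r) := (min(r,1))^{-(d-2-β)/2} · exp(-√κ/(β·min(r,1)^β))` (dimension `d`). -/
def hfun (d : ℕ) (β κ r : ℝ) : ℝ :=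
  (min r 1) ^ (-(((d : ℝ) - 2 - β) / 2)) *
    Real.exp (-(Real.sqrt κ / (β * (min r 1) ^ β)))

/-- The function `H_{d,β,κ}(t,r)`. -/
def HD (d : ℕ) (β κ t r : ℝ) : ℝ :=
  if d = 1 then min 1 ((if r < 1 then hfun d β κ r else r) / Real.sqrt t)
  else if d = 2 then
    min 1 ((if r < 1 then hfun d β κ r else LLog r) / LLog (Real.sqrt t))
  else hfun d β κ r

/-- The boundary function `ψ_{d,R}(t,r)`. -/
def psiD (d : ℕ) (R t r : ℝ) : ℝ :=
  if d = 1 then min 1 ((r - R) / Real.sqrt t)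
  else if d = 2 then
    min 1 ((min (r - R) R * LLog ((r - R) / R)) /
      (min (Real.sqrt t) R * LLog (Real.sqrt t / R)))
  else min 1 (min (r - R) R / min (Real.sqrt t) R)

lemma one_lt_em1 : (1:ℝ) < Real.exp 1 - 1 := by
  have := Real.exp_one_gt_d9
  norm_num at this ⊢
  linarith

lemma LLog_pos {x : ℝ} (hx : 0 ≤ x) : 0 < LLog x :=
  Real.log_pos (by have := one_lt_em1; linarith)

lemma LLog_mono {x y : ℝ} (hx : 0 ≤ x) (h : x ≤ y) : LLog x ≤ LLog y :=
  Real.log_le_log (by have := one_lt_em1; linarith) (by linarith)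

lemma one_le_LLog {x : ℝ} (hx : 1 ≤ x) : 1 ≤ LLog x := by
  have h1 : Real.log (Real.exp 1) ≤ LLog x := by
    apply Real.log_le_log (Real.exp_pos 1)
    linarith
  rwa [Real.log_exp] at h1

/-- Comparison of `LLog (c*x)` with `LLog x`. -/
lemma LLog_mul_le (c : ℝ) (hc : 0 < c) :
    ∃ K : ℝ, 1 ≤ K ∧ ∀ x : ℝ, 0 ≤ x → LLog (c * x) ≤ K * LLog x := by
  have hL0 : 0 < Real.log (Real.exp 1 - 1) := Real.log_pos one_lt_em1
  refine ⟨1 + max (Real.log c) 0 / Real.log (Real.exp 1 - 1), ?_, ?_⟩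
  · have : 0 ≤ max (Real.log c) 0 / Real.log (Real.exp 1 - 1) :=
      div_nonneg (le_max_right _ _) hL0.le
    linarith
  · intro x hx
    have hLx : Real.log (Real.exp 1 - 1) ≤ LLog x :=
      Real.log_le_log (by linarith [one_lt_em1]) (by linarith)
    have hLxpos : 0 < LLog x := LLog_pos hx
    rcases le_total c 1 with h1 | h1
    · have hmono : LLog (c * x) ≤ LLog x :=
        LLog_mono (by positivity) (by nlinarith)
      have : 0 ≤ max (Real.log c) 0 / Real.log (Real.exp 1 - 1) :=
        div_nonneg (le_max_right _ _) hL0.le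
      nlinarith
    · have hcx : 0 < Real.exp 1 - 1 + c * x := by nlinarith [one_lt_em1]
      have hkey : LLog (c * x) ≤ Real.log c + LLog x := by
        have h2 : LLog (c * x) ≤ Real.log (c * (Real.exp 1 - 1 + x)) := by
          apply Real.log_le_log hcx
          nlinarith [one_lt_em1]
        rwa [Real.log_mul (by positivity) (by nlinarith [one_lt_em1])] at h2
      have hlogc : 0 ≤ Real.log c := Real.log_nonneg h1
      have hmax : max (Real.log c) 0 = Real.log c := max_eq_left hlogc
      have hdiv : Real.log c ≤ (Real.log c / Real.log (Real.exp 1 - 1)) * LLog x := by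
        have := mul_le_mul_of_nonneg_left hLx (div_nonneg hlogc hL0.le)
        rwa [div_mul_cancel₀ _ hL0.ne'] at this
      rw [hmax]
      nlinarith

/-- Uniform two-sided bounds for `hfun` on `[a, ∞)`. -/
lemma hfun_bounds (d : ℕ) (β κ a : ℝ) (hβ : 0 < β) (ha : 0 < a) (ha1 : a ≤ 1) :
    ∃ c1 c2 : ℝ, 0 < c1 ∧ c1 ≤ c2 ∧
      ∀ r : ℝ, a ≤ r → c1 ≤ hfun d β κ r ∧ hfun d β κ r ≤ c2 := by
  set e : ℝ := -(((d : ℝ) - 2 - β) / 2) with he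
  have haβ : 0 < a ^ β := Real.rpow_pos_of_pos ha β
  refine ⟨Real.exp (min (Real.log a * e) 0) * Real.exp (-(Real.sqrt κ / (β * a ^ β))),
    Real.exp (max (Real.log a * e) 0), by positivity, ?_, ?_⟩
  · have h1 : Real.exp (-(Real.sqrt κ / (β * a ^ β))) ≤ 1 := by
      rw [← Real.exp_zero]
      apply Real.exp_le_exp.mpr
      have : 0 ≤ Real.sqrt κ / (β * a ^ β) := by positivity
      linarith
    have h2 : Real.exp (min (Real.log a * e) 0) ≤ Real.exp (max (Real.log a * e) 0) :=
      Real.exp_le_exp.mpr (le_trans (min_le_left _ _) (le_max_left _ _))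
    nlinarith [Real.exp_pos (min (Real.log a * e) 0)]
  · intro r hr
    set m : ℝ := min r 1 with hm
    have hma : a ≤ m := le_min hr ha1
    have hm1 : m ≤ 1 := min_le_right _ _
    have hmpos : 0 < m := lt_of_lt_of_le ha hma
    have hmβ : 0 < m ^ β := Real.rpow_pos_of_pos hmpos β
    have hfe : hfun d β κ r = Real.exp (Real.log m * e) *
        Real.exp (-(Real.sqrt κ / (β * m ^ β))) := by
      rw [hfun, ← hm, ← he, Real.rpow_def_of_pos hmpos]
    have hlm : Real.log a ≤ Real.log m := Real.log_le_log ha hma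
    have hlm0 : Real.log m ≤ 0 := Real.log_nonpos hmpos.le hm1
    have h1 : min (Real.log a * e) 0 ≤ Real.log m * e := by
      rcases le_or_gt 0 e with hee | hee
      · exact le_trans (min_le_left _ _) (mul_le_mul_of_nonneg_right hlm hee)
      · exact le_trans (min_le_right _ _) (by nlinarith)
    have h2 : Real.log m * e ≤ max (Real.log a * e) 0 := by
      rcases le_or_gt 0 e with hee | hee
      · exact le_trans (by nlinarith) (le_max_right _ _)
      · exact le_trans (by nlinarith) (le_max_left _ _)
    have haβm : a ^ β ≤ m ^ β := Real.rpow_le_rpow ha.le hma hβ.le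
    have hfrac : Real.sqrt κ / (β * m ^ β) ≤ Real.sqrt κ / (β * a ^ β) :=
      div_le_div_of_nonneg_left (Real.sqrt_nonneg κ) (by positivity) (by nlinarith)
    have hexp1 : Real.exp (-(Real.sqrt κ / (β * a ^ β))) ≤
        Real.exp (-(Real.sqrt κ / (β * m ^ β))) := Real.exp_le_exp.mpr (by linarith)
    have hexp2 : Real.exp (-(Real.sqrt κ / (β * m ^ β))) ≤ 1 := by
      rw [← Real.exp_zero]
      apply Real.exp_le_exp.mpr
      have : 0 ≤ Real.sqrt κ / (β * m ^ β) := by positivity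
      linarith
    constructor
    · rw [hfe]
      exact mul_le_mul (Real.exp_le_exp.mpr h1) hexp1 (by positivity) (by positivity)
    · rw [hfe]
      nlinarith [Real.exp_le_exp.mpr h2, Real.exp_pos (Real.log m * e),
        Real.exp_pos (-(Real.sqrt κ / (β * m ^ β))), Real.exp_pos (max (Real.log a * e) 0)]

lemma div_le_div_mul' {a b a' b' K1 K2 : ℝ} (ha : 0 ≤ a) (hb : 0 < b) (hb' : 0 < b')
    (h1 : a ≤ K1 * a') (h2 : b' ≤ K2 * b) : a / b ≤ (K1 * K2) * (a' / b') := by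
  rw [← mul_div_assoc, div_le_div_iff₀ hb hb']
  have hKa : 0 ≤ K1 * a' := le_trans ha h1
  nlinarith [mul_le_mul h1 h2 hb'.le hKa]

lemma min_one_le_mul {c x y : ℝ} (hc : 1 ≤ c) (h : x ≤ c * y) :
    min 1 x ≤ c * min 1 y := by
  rcases le_total y 1 with hy | hy
  · rw [min_eq_right hy]
    exact le_trans (min_le_right _ _) h
  · rw [min_eq_left hy]
    have : min 1 x ≤ 1 := min_le_left _ _
    linarith

lemma minpair {a b a' b' K : ℝ} (hK : 1 ≤ K) (ha : 0 ≤ a) (ha' : 0 ≤ a')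
    (hb : 0 < b) (hb' : 0 < b')
    (h1 : a ≤ K * a') (h2 : b' ≤ K * b) (h3 : a' ≤ K * a) (h4 : b ≤ K * b') :
    min 1 (a / b) ≤ (K * K) * min 1 (a' / b') ∧
      min 1 (a' / b') ≤ (K * K) * min 1 (a / b) := by
  have hKK : 1 ≤ K * K := by nlinarith
  constructor
  · exact min_one_le_mul hKK (div_le_div_mul' ha hb hb' h1 h2)
  · exact min_one_le_mul hKK (div_le_div_mul' ha' hb' hb h3 h4)

lemma pair_final {C Hv Pv : ℝ} (hC : 0 < C) (h1 : Hv ≤ C * Pv) (h2 : Pv ≤ C * Hv) :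
    C⁻¹ * Pv ≤ Hv ∧ Hv ≤ C * Pv := by
  refine ⟨?_, h1⟩
  have := mul_le_mul_of_nonneg_left h2 (inv_nonneg.mpr hC.le)
  calc C⁻¹ * Pv ≤ C⁻¹ * (C * Hv) := this
    _ = Hv := by field_simp

lemma bump {A B K : ℝ} (hK : 1 ≤ K) (hA : 0 ≤ A) (hB : 0 ≤ B)
    (h1 : A ≤ K * K * B) (h2 : B ≤ K * K * A) :
    (K * K + 1)⁻¹ * B ≤ A ∧ A ≤ (K * K + 1) * B :=
  pair_final (by nlinarith) (by nlinarith) (by nlinarith)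

set_option maxHeartbeats 1000000 in
theorem stmt18 (d : ℕ) (hd : 1 ≤ d) (β κ : ℝ) (hβ : 0 < β) (hκ : 0 < κ)
    (R : ℝ) (hR : 0 < R) :
    ∃ C : ℝ, 1 < C ∧ ∀ t r : ℝ, R ^ 2 ≤ t → 2 * R ≤ r →
      C⁻¹ * psiD d R t r ≤ HD d β κ t r ∧ HD d β κ t r ≤ C * psiD d R t r := by
  obtain ⟨c1, c2, hc1, hc12, hbd⟩ := hfun_bounds d β κ (min (2*R) 1) hβ
    (lt_min (by linarith) one_pos) (min_le_right _ _)
  have key : ∀ r : ℝ, 2*R ≤ r → c1 ≤ hfun d β κ r ∧ hfun d β κ r ≤ c2 :=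
    fun r hr => hbd r (le_trans (min_le_left _ _) hr)
  have hsqt : ∀ t : ℝ, R^2 ≤ t → R ≤ Real.sqrt t := by
    intro t ht
    have h := Real.sqrt_le_sqrt ht
    rwa [Real.sqrt_sq hR.le] at h
  rcases Nat.lt_or_ge d 3 with hlt | hge
  · interval_cases d
    · -- d = 1
      obtain ⟨K, hK2, hKc2, hKc1⟩ : ∃ K : ℝ, (2:ℝ) ≤ K ∧ c2/R ≤ K ∧ 1/c1 ≤ K :=
        ⟨max (max 2 (c2/R)) (1/c1),
          le_trans (le_max_left _ _) (le_max_left _ _),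
          le_trans (le_max_right _ _) (le_max_left _ _), le_max_right _ _⟩
      have hK1 : (1:ℝ) ≤ K := by linarith
      refine ⟨K*K + 1, by nlinarith, ?_⟩
      intro t r ht hr
      have hs : R ≤ Real.sqrt t := hsqt t ht
      have hspos : 0 < Real.sqrt t := lt_of_lt_of_le hR hs
      have hH : HD 1 β κ t r =
          min 1 ((if r < 1 then hfun 1 β κ r else r) / Real.sqrt t) := by
        simp [HD]
      have hP : psiD 1 R t r = min 1 ((r - R)/Real.sqrt t) := by simp [psiD]
      set N := if r < 1 then hfun 1 β κ r else r with hN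
      have hN0 : 0 < N := by
        rw [hN]; split_ifs with h
        · exact lt_of_lt_of_le hc1 (key r hr).1
        · linarith
      have h1 : N ≤ K * (r - R) := by
        rw [hN]; split_ifs with h
        · have h2 := (key r hr).2
          have hcc : c2/R * R = c2 := div_mul_cancel₀ _ hR.ne'
          nlinarith [mul_le_mul_of_nonneg_left (show R ≤ r - R by linarith)
            (show (0:ℝ) ≤ K by linarith), mul_le_mul_of_nonneg_right hKc2 hR.le]
        · nlinarith [mul_nonneg (show (0:ℝ) ≤ K - 2 by linarith)
            (show (0:ℝ) ≤ r - 2*R by linarith)]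
      have h3 : r - R ≤ K * N := by
        rw [hN]; split_ifs with h
        · have hc := (key r hr).1
          nlinarith [one_div_mul_cancel hc1.ne',
            mul_le_mul_of_nonneg_left hc (show (0:ℝ) ≤ K by linarith),
            mul_le_mul_of_nonneg_right hKc1 hc1.le]
        · nlinarith [mul_le_mul_of_nonneg_right hK1 (show (0:ℝ) ≤ r by linarith)]
      have hpair := minpair hK1 hN0.le (show (0:ℝ) ≤ r - R by linarith) hspos hspos
        h1 (by nlinarith) h3 (by nlinarith)
      rw [hH, hP]
      exact bump hK1 (le_min zero_le_one (div_nonneg hN0.le hspos.le))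
        (le_min zero_le_one (div_nonneg (by linarith) hspos.le)) hpair.1 hpair.2
    · -- d = 2
      obtain ⟨Ka, hKa1, hKa⟩ := LLog_mul_le R⁻¹ (by positivity)
      obtain ⟨Kb, hKb1, hKb⟩ := LLog_mul_le R hR
      obtain ⟨Kc, hKc1, hKc⟩ := LLog_mul_le (2*R) (by linarith)
      obtain ⟨K, hKc2, hKKc, hKM, hKKa, hKKb⟩ :
          ∃ K : ℝ, c2 ≤ K ∧ Kc ≤ K ∧ LLog (1/R) / c1 ≤ K ∧ Ka ≤ K ∧ Kb ≤ K :=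
        ⟨max (max (max c2 Kc) (max (LLog (1/R) / c1) Ka)) Kb,
          le_trans (le_max_left _ _) (le_trans (le_max_left _ _) (le_max_left _ _)),
          le_trans (le_max_right _ _) (le_trans (le_max_left _ _) (le_max_left _ _)),
          le_trans (le_max_left _ _) (le_trans (le_max_right _ _) (le_max_left _ _)),
          le_trans (le_max_right _ _) (le_trans (le_max_right _ _) (le_max_left _ _)),
          le_max_right _ _⟩
      have hK1 : (1:ℝ) ≤ K := le_trans hKa1 hKKa
      refine ⟨K*K + 1, by nlinarith, ?_⟩
      intro t r ht hr
      have hs : R ≤ Real.sqrt t := hsqt t ht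
      have hspos : 0 < Real.sqrt t := lt_of_lt_of_le hR hs
      have hH : HD 2 β κ t r =
          min 1 ((if r < 1 then hfun 2 β κ r else LLog r) / LLog (Real.sqrt t)) := by
        simp [HD]
      have hP : psiD 2 R t r =
          min 1 (LLog ((r - R)/R) / LLog (Real.sqrt t / R)) := by
        rw [psiD]
        norm_num
        rw [min_eq_right (show R ≤ r - R by linarith), min_eq_right hs,
          mul_div_mul_left _ _ hR.ne']
      set N := if r < 1 then hfun 2 β κ r else LLog r with hN
      set M := LLog ((r - R)/R) with hM
      have hM1 : (1:ℝ) ≤ M := one_le_LLog (by rw [le_div_iff₀ hR]; linarith)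
      have hN0 : 0 < N := by
        rw [hN]; split_ifs with h
        · exact lt_of_lt_of_le hc1 (key r hr).1
        · exact LLog_pos (by linarith)
      have hb : 0 < LLog (Real.sqrt t) := LLog_pos (Real.sqrt_nonneg t)
      have hb' : 0 < LLog (Real.sqrt t / R) := LLog_pos (by positivity)
      have h1 : N ≤ K * M := by
        rw [hN]; split_ifs with h
        · have h2 := (key r hr).2
          nlinarith [mul_le_mul_of_nonneg_left hM1 (show (0:ℝ) ≤ K by linarith)]
        · have hr1 : 1 ≤ r := not_lt.mp h
          have heq : 2*R*((r - R)/R) = 2*(r - R) := by field_simp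
          have hmono : LLog r ≤ LLog (2*R * ((r - R)/R)) := by
            apply LLog_mono (by linarith)
            rw [heq]; linarith
          have hstep : LLog (2*R * ((r - R)/R)) ≤ Kc * M :=
            hKc _ (div_nonneg (by linarith) hR.le)
          nlinarith [mul_le_mul_of_nonneg_right hKKc (show (0:ℝ) ≤ M by linarith)]
      have h3 : M ≤ K * N := by
        rw [hN]; split_ifs with h
        · have hc := (key r hr).1
          have hmono : M ≤ LLog (1/R) := by
            apply LLog_mono (div_nonneg (by linarith) hR.le)
            apply div_le_div_of_nonneg_right ?_ hR.le
            linarith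
          nlinarith [div_mul_cancel₀ (LLog (1/R)) hc1.ne',
            mul_le_mul_of_nonneg_left hc (show (0:ℝ) ≤ K by linarith),
            mul_le_mul_of_nonneg_right hKM hc1.le]
        · have hr1 : 1 ≤ r := not_lt.mp h
          have hN1 : (1:ℝ) ≤ LLog r := one_le_LLog hr1
          have hmono : M ≤ LLog (R⁻¹ * r) := by
            apply LLog_mono (div_nonneg (by linarith) hR.le)
            rw [show R⁻¹ * r = r / R by ring]
            apply div_le_div_of_nonneg_right ?_ hR.le
            linarith
          have hstep : LLog (R⁻¹ * r) ≤ Ka * LLog r := hKa r (by linarith)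
          nlinarith [mul_le_mul_of_nonneg_right hKKa (show (0:ℝ) ≤ LLog r by linarith)]
      have h2 : LLog (Real.sqrt t / R) ≤ K * LLog (Real.sqrt t) := by
        have hmono : LLog (Real.sqrt t / R) = LLog (R⁻¹ * Real.sqrt t) := by
          rw [show R⁻¹ * Real.sqrt t = Real.sqrt t / R by ring]
        rw [hmono]
        have := hKa (Real.sqrt t) (Real.sqrt_nonneg t)
        nlinarith [mul_le_mul_of_nonneg_right hKKa hb.le]
      have h4 : LLog (Real.sqrt t) ≤ K * LLog (Real.sqrt t / R) := by
        have heq : R * (Real.sqrt t / R) = Real.sqrt t := by field_simp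
        have := hKb (Real.sqrt t / R) (by positivity)
        rw [heq] at this
        nlinarith [mul_le_mul_of_nonneg_right hKKb hb'.le]
      have hpair := minpair hK1 hN0.le (show (0:ℝ) ≤ M by linarith) hb hb' h1 h2 h3 h4
      rw [hH, hP]
      exact bump hK1 (le_min zero_le_one (div_nonneg hN0.le hb.le))
        (le_min zero_le_one (div_nonneg (by linarith) hb'.le)) hpair.1 hpair.2
  · -- d ≥ 3
    have hd1 : d ≠ 1 := by omega
    have hd2 : d ≠ 2 := by omega
    have hc1' : 0 < 1/c1 := by positivity
    refine ⟨max (1/c1) c2 + 1, by linarith [le_max_left (1/c1) c2], ?_⟩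
    intro t r ht hr
    have hs : R ≤ Real.sqrt t := hsqt t ht
    have hH : HD d β κ t r = hfun d β κ r := by rw [HD, if_neg hd1, if_neg hd2]
    have hP : psiD d R t r = 1 := by
      rw [psiD, if_neg hd1, if_neg hd2, min_eq_right (show R ≤ r - R by linarith),
        min_eq_right hs, div_self hR.ne', min_self]
    rw [hH, hP]
    have hkey := key r hr
    constructor
    · rw [mul_one]
      have h1c : 1/c1 ≤ max (1/c1) c2 + 1 := by linarith [le_max_left (1/c1) c2]
      have hinv : 1/(max (1/c1) c2 + 1) ≤ 1/(1/c1) :=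
        one_div_le_one_div_of_le hc1' h1c
      rw [one_div_one_div] at hinv
      rw [← one_div]
      linarith [hkey.1]
    · rw [mul_one]
      linarith [le_max_right (1/c1) c2, hkey.2]

end
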